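/- In ℝ⁵ (d = 5, no dilatons) consider the magnetic wall form w_M = e₁ of a 3-form and the symmetry wall form w_S = e₂ − e₁. Then (w_M|w_M) = 3/4, (w_S|w_S) = 2, (w_M|w_S) = −1, so (w_M|w_S)²/((w_M|w_M)(w_S|w_S)) = 2/3; and for every integer k ≥ 2 one has cos²(π/k) ≠ 2/3. (Hence the dihedral angle between these two walls is not an integer submultiple of π, and the Einstein–3-form billiard in spacetime dimension D = 6 is not a Coxeter polyhedron.) -/
import Mathlib


/-- The wall scalar product on `ℝ^d` (no dilatons):
`(w|w') = Σᵢ wᵢw'ᵢ − (1/(d−1)) (Σᵢ wᵢ)(Σᵢ w'ᵢ)`. -/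
noncomputable def wallIP (d : ℕ) (w w' : Fin d → ℝ) : ℝ :=
  (∑ i, w i * w' i) - (1 / ((d : ℝ) - 1)) * (∑ i, w i) * (∑ i, w' i)

lemma cos_sq_ne (k : ℕ) (hk : 2 ≤ k) : Real.cos (Real.pi / k) ^ 2 ≠ 2 / 3 := by
  intro h
  have hkc : (k : ℂ) ≠ 0 := Nat.cast_ne_zero.mpr (by omega)
  -- cos(2π/k) = 1/3
  have hcos : Real.cos (2 * Real.pi / k) = 1 / 3 := by
    have := Real.cos_two_mul (Real.pi / k)
    rw [h] at this
    rw [show 2 * Real.pi / k = 2 * (Real.pi / k) by ring, this]; norm_num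
  set ζ : ℂ := Complex.exp ((2 * Real.pi / k : ℝ) * Complex.I) with hζ
  have hζk : ζ ^ k = 1 := by
    rw [hζ, ← Complex.exp_nat_mul]
    have he : (k : ℂ) * (((2 * Real.pi / k : ℝ) : ℂ) * Complex.I)
        = (2 * Real.pi) * Complex.I := by
      push_cast; field_simp
    rw [he, Complex.exp_two_pi_mul_I]
  have hint : IsIntegral ℤ ζ := by
    refine ⟨Polynomial.X ^ k - Polynomial.C 1, Polynomial.monic_X_pow_sub_C 1 (by omega), ?_⟩
    simp [hζk]
  have hintinv : IsIntegral ℤ ζ⁻¹ := by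
    refine ⟨Polynomial.X ^ k - Polynomial.C 1, Polynomial.monic_X_pow_sub_C 1 (by omega), ?_⟩
    simp [inv_pow, hζk]
  have hsum : ζ + ζ⁻¹ = (2 / 3 : ℂ) := by
    rw [hζ, ← Complex.exp_neg, ← neg_mul, ← Complex.two_cos, ← Complex.ofReal_cos, hcos]
    norm_num
  have h23 : IsIntegral ℤ ((2 / 3 : ℂ)) := hsum ▸ hint.add hintinv
  have : IsIntegral ℤ ((2 / 3 : ℚ)) := by
    have he : (2 / 3 : ℂ) = algebraMap ℚ ℂ (2 / 3 : ℚ) := by norm_num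
    rw [he] at h23
    exact (isIntegral_algebraMap_iff (algebraMap ℚ ℂ).injective).mp h23
  obtain ⟨n, hn⟩ := IsIntegrallyClosed.isIntegral_iff.mp this
  have h3 : (3 : ℚ) * n = 2 := by
    rw [show ((algebraMap ℤ ℚ) n : ℚ) = (n : ℚ) from rfl] at hn
    rw [hn]; norm_num
  have : (3 : ℤ) * n = 2 := by exact_mod_cast h3
  omega

/-- In `ℝ⁵` (d = 5), the magnetic wall form `w_M = e₁` of a 3-form and the symmetry
wall form `w_S = e₂ − e₁` satisfy `(w_M|w_M) = 3/4`, `(w_S|w_S) = 2`, `(w_M|w_S) = −1`,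
so the squared cosine of their dihedral angle is `2/3`; and `cos²(π/k) ≠ 2/3` for every
integer `k ≥ 2`. Hence the Einstein–3-form billiard in `D = 6` is not Coxeter. -/
theorem magnetic_wall_D6_not_coxeter (wM wS : Fin 5 → ℝ)
    (hM : ∀ i, wM i = if i.val = 0 then 1 else 0)
    (hS : ∀ i, wS i = (if i.val = 1 then 1 else 0) - (if i.val = 0 then 1 else 0)) :
    wallIP 5 wM wM = 3 / 4 ∧
    wallIP 5 wS wS = 2 ∧
    wallIP 5 wM wS = -1 ∧
    (wallIP 5 wM wS) ^ 2 / (wallIP 5 wM wM * wallIP 5 wS wS) = 2 / 3 ∧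
    (∀ k : ℕ, 2 ≤ k → Real.cos (Real.pi / k) ^ 2 ≠ 2 / 3) := by
  have h1 : wallIP 5 wM wM = 3 / 4 := by
    simp only [wallIP, Fin.sum_univ_five, hM, hS, show ((0:Fin 5):ℕ) = 0 from rfl, show ((1:Fin 5):ℕ) = 1 from rfl, show ((2:Fin 5):ℕ) = 2 from rfl, show ((3:Fin 5):ℕ) = 3 from rfl, show ((4:Fin 5):ℕ) = 4 from rfl]; norm_num
  have h2 : wallIP 5 wS wS = 2 := by
    simp only [wallIP, Fin.sum_univ_five, hM, hS, show ((0:Fin 5):ℕ) = 0 from rfl, show ((1:Fin 5):ℕ) = 1 from rfl, show ((2:Fin 5):ℕ) = 2 from rfl, show ((3:Fin 5):ℕ) = 3 from rfl, show ((4:Fin 5):ℕ) = 4 from rfl]; norm_num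
  have h3 : wallIP 5 wM wS = -1 := by
    simp only [wallIP, Fin.sum_univ_five, hM, hS, show ((0:Fin 5):ℕ) = 0 from rfl, show ((1:Fin 5):ℕ) = 1 from rfl, show ((2:Fin 5):ℕ) = 2 from rfl, show ((3:Fin 5):ℕ) = 3 from rfl, show ((4:Fin 5):ℕ) = 4 from rfl]; norm_num
  refine ⟨h1, h2, h3, by rw [h1, h2, h3]; norm_num, fun k hk => cos_sq_ne k hk⟩
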